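/- arXiv:2101.03874 — 9 statements merged into one kernel-verified Lean document; each statement's English description precedes it below -/
import Mathlib

section
/- Let P, Q, V : ℝ² → ℝ be C¹ and let s > 0 be a real number. Define M_s := V_x·P + V_y·Q − s·(P_x + Q_y)·V. If M_s does not change sign and its zero set has Lebesgue measure zero, then for every periodic solution γ of the system ẋ = P(x,y), ẏ = Q(x,y), either the image of γ is entirely contained in the set {(x,y) : V(x,y) = 0} or the image of γ is disjoint from this set. -/
/-!
Along a solution `γ`, the function `v = V ∘ γ` satisfies the linear equation
`v' = s (P_x + Q_y)(γ) v + M_s(γ)`. With the integrating factor `exp (-∫ s (P_x + Q_y)(γ))`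
the product `v · exp (…)` is monotone because `M_s` has constant sign. Hence if `v (t₀) = 0`, then
`v` has one sign before `t₀` and the opposite sign after it, and periodicity forces `v ≡ 0`.
-/

open MeasureTheory

noncomputable def pdx (f : ℝ × ℝ → ℝ) (p : ℝ × ℝ) : ℝ := deriv (fun u => f (u, p.2)) p.1
noncomputable def pdy (f : ℝ × ℝ → ℝ) (p : ℝ × ℝ) : ℝ := deriv (fun v => f (p.1, v)) p.2

/-- A solution of the planar system `ẋ = P(x,y)`, `ẏ = Q(x,y)`. -/
def IsSolution (P Q : ℝ × ℝ → ℝ) (γ : ℝ → ℝ × ℝ) : Prop :=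
  ∀ t, HasDerivAt γ (P (γ t), Q (γ t)) t

/-- A curve is periodic if it has a positive period. -/
def IsPeriodicSol (γ : ℝ → ℝ × ℝ) : Prop :=
  ∃ T > 0, ∀ t, γ (t + T) = γ t

/-- A curve is nonconstant. -/
def IsNonconstant (γ : ℝ → ℝ × ℝ) : Prop := ∃ t s, γ t ≠ γ s

/-- A periodic orbit of the system: the image of a nonconstant periodic solution. -/
def IsPeriodicOrbit (P Q : ℝ × ℝ → ℝ) (O : Set (ℝ × ℝ)) : Prop :=
  ∃ γ : ℝ → ℝ × ℝ, IsSolution P Q γ ∧ IsPeriodicSol γ ∧ IsNonconstant γ ∧ O = Set.range γ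

open Set Real

theorem Function.Periodic.eq_zero_of_nonpos_of_nonneg {α β : Type*} [AddCommGroup α]
    [LinearOrder α] [IsOrderedAddMonoid α] [Archimedean α] [PartialOrder β] [Zero β]
    {f : α → β} {c : α} (hf : Function.Periodic f c) (hc : 0 < c) {a : α}
    (hle : ∀ x ≤ a, f x ≤ 0) (hge : ∀ x ≥ a, 0 ≤ f x) (x : α) : f x = 0 := by
  obtain ⟨y, hy, hxy⟩ := hf.exists_mem_Ico hc x a
  obtain ⟨z, hz, hxz⟩ := hf.exists_mem_Ico hc x (a - c)
  rw [sub_add_cancel] at hz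
  exact le_antisymm (hxz ▸ hle z hz.2.le) (hxy ▸ hge y hy.1)

theorem monotone_mul_exp_neg_integral {v a m : ℝ → ℝ} (ha : Continuous a)
    (hv : ∀ t, HasDerivAt v (a t * v t + m t) t) (hm : ∀ t, 0 ≤ m t) (t₀ : ℝ) :
    Monotone fun t => v t * exp (-∫ x in t₀..t, a x) := by
  refine monotone_of_hasDerivAt_nonneg (f' := fun t => m t * exp (-∫ x in t₀..t, a x))
    (fun t => ?_) fun t => mul_nonneg (hm t) (exp_pos _).le
  have hA : HasDerivAt (fun t => ∫ x in t₀..t, a x) (a t) t :=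
    intervalIntegral.integral_hasDerivAt_right (ha.intervalIntegrable _ _)
      (ha.stronglyMeasurableAtFilter _ _) ha.continuousAt
  refine ((hv t).mul hA.neg.exp).congr_deriv ?_
  simp only [Pi.neg_apply]
  ring

theorem Function.Periodic.eq_zero_of_hasDerivAt_linear_of_nonneg {v a m : ℝ → ℝ} {T : ℝ}
    (hper : Function.Periodic v T) (hT : 0 < T) (ha : Continuous a)
    (hv : ∀ t, HasDerivAt v (a t * v t + m t) t) (hm : ∀ t, 0 ≤ m t) {t₀ : ℝ} (h₀ : v t₀ = 0)
    (t : ℝ) : v t = 0 := by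
  have hmono := monotone_mul_exp_neg_integral ha hv hm t₀
  have hw₀ : v t₀ * exp (-∫ x in t₀..t₀, a x) = 0 := by rw [h₀, zero_mul]
  refine hper.eq_zero_of_nonpos_of_nonneg hT (a := t₀) (fun x hx => ?_) (fun x hx => ?_) t
  · have hw : v x * exp (-∫ y in t₀..x, a y) ≤ 0 := hw₀ ▸ hmono hx
    exact nonpos_of_mul_nonpos_left hw (exp_pos _)
  · have hw : 0 ≤ v x * exp (-∫ y in t₀..x, a y) := hw₀ ▸ hmono hx
    exact nonneg_of_mul_nonneg_left hw (exp_pos _)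

theorem Function.Periodic.eq_zero_of_hasDerivAt_linear {v a m : ℝ → ℝ} {T : ℝ}
    (hper : Function.Periodic v T) (hT : 0 < T) (ha : Continuous a)
    (hv : ∀ t, HasDerivAt v (a t * v t + m t) t) (hm : (∀ t, 0 ≤ m t) ∨ (∀ t, m t ≤ 0))
    {t₀ : ℝ} (h₀ : v t₀ = 0) (t : ℝ) : v t = 0 := by
  rcases hm with hm | hm
  · exact hper.eq_zero_of_hasDerivAt_linear_of_nonneg hT ha hv hm h₀ t
  · have hv' : ∀ t, HasDerivAt (-v) (a t * (-v) t + (-m) t) t := fun t =>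
      (hv t).neg.congr_deriv (by simp only [Pi.neg_apply]; ring)
    have hper' : Function.Periodic (-v) T := fun t => by simp only [Pi.neg_apply, hper t]
    simpa using hper'.eq_zero_of_hasDerivAt_linear_of_nonneg hT ha hv'
      (fun t => neg_nonneg.2 (hm t)) (t₀ := t₀) (by simp [h₀]) t

theorem pdx_eq_fderiv_apply {f : ℝ × ℝ → ℝ} {p : ℝ × ℝ} (hf : DifferentiableAt ℝ f p) :
    pdx f p = fderiv ℝ f p (1, 0) :=
  (hf.hasFDerivAt.comp_hasDerivAt p.1 ((hasDerivAt_id p.1).prodMk (hasDerivAt_const p.1 p.2))).deriv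

theorem pdy_eq_fderiv_apply {f : ℝ × ℝ → ℝ} {p : ℝ × ℝ} (hf : DifferentiableAt ℝ f p) :
    pdy f p = fderiv ℝ f p (0, 1) :=
  (hf.hasFDerivAt.comp_hasDerivAt p.2 ((hasDerivAt_const p.2 p.1).prodMk (hasDerivAt_id p.2))).deriv

theorem fderiv_apply_eq_pdx_add_pdy {f : ℝ × ℝ → ℝ} {p : ℝ × ℝ} (hf : DifferentiableAt ℝ f p)
    (u : ℝ × ℝ) : fderiv ℝ f p u = pdx f p * u.1 + pdy f p * u.2 := by
  have hu : u = u.1 • ((1 : ℝ), (0 : ℝ)) + u.2 • ((0 : ℝ), (1 : ℝ)) := by ext <;> simp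
  rw [pdx_eq_fderiv_apply hf, pdy_eq_fderiv_apply hf]
  conv_lhs => rw [hu, map_add, map_smul, map_smul, smul_eq_mul, smul_eq_mul]
  ring

theorem ContDiff.continuous_pdx {f : ℝ × ℝ → ℝ} (hf : ContDiff ℝ 1 f) : Continuous (pdx f) := by
  simp_rw [funext fun p => pdx_eq_fderiv_apply (hf.differentiable one_ne_zero p)]
  exact (hf.continuous_fderiv one_ne_zero).clm_apply continuous_const

theorem ContDiff.continuous_pdy {f : ℝ × ℝ → ℝ} (hf : ContDiff ℝ 1 f) : Continuous (pdy f) := by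
  simp_rw [funext fun p => pdy_eq_fderiv_apply (hf.differentiable one_ne_zero p)]
  exact (hf.continuous_fderiv one_ne_zero).clm_apply continuous_const

theorem IsSolution.continuous {P Q : ℝ × ℝ → ℝ} {γ : ℝ → ℝ × ℝ} (hγ : IsSolution P Q γ) :
    Continuous γ :=
  continuous_iff_continuousAt.2 fun t => (hγ t).continuousAt

theorem IsSolution.hasDerivAt_comp {P Q V : ℝ × ℝ → ℝ} {γ : ℝ → ℝ × ℝ} (hγ : IsSolution P Q γ)
    (hV : Differentiable ℝ V) (t : ℝ) :
    HasDerivAt (fun t => V (γ t)) (pdx V (γ t) * P (γ t) + pdy V (γ t) * Q (γ t)) t := by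
  have h := (hV (γ t)).hasFDerivAt.comp_hasDerivAt t (hγ t)
  rwa [fderiv_apply_eq_pdx_add_pdy (hV (γ t))] at h

theorem stmt_1_general (P Q V : ℝ × ℝ → ℝ)
    (hP : ContDiff ℝ 1 P) (hQ : ContDiff ℝ 1 Q) (hV : ContDiff ℝ 1 V)
    (s : ℝ)
    (M : ℝ × ℝ → ℝ)
    (hM : M = fun p => pdx V p * P p + pdy V p * Q p - s * (pdx P p + pdy Q p) * V p)
    (hsign : (∀ p, 0 ≤ M p) ∨ (∀ p, M p ≤ 0))
    (γ : ℝ → ℝ × ℝ) (hγ : IsSolution P Q γ) (hper : IsPeriodicSol γ) :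
    Set.range γ ⊆ {p : ℝ × ℝ | V p = 0} ∨ Set.range γ ∩ {p : ℝ × ℝ | V p = 0} = ∅ := by
  rcases eq_empty_or_nonempty (range γ ∩ {p | V p = 0}) with hempty | ⟨_, ⟨t₀, rfl⟩, h₀⟩
  · exact Or.inr hempty
  obtain ⟨T, hT, hperT⟩ := hper
  set a : ℝ → ℝ := fun t => s * (pdx P (γ t) + pdy Q (γ t))
  have ha : Continuous a := continuous_const.mul
    ((hP.continuous_pdx.comp hγ.continuous).add (hQ.continuous_pdy.comp hγ.continuous))
  have hv : ∀ t, HasDerivAt (fun t => V (γ t)) (a t * V (γ t) + M (γ t)) t := fun t =>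
    (hγ.hasDerivAt_comp (hV.differentiable one_ne_zero) t).congr_deriv (by rw [hM]; ring)
  have hvanish := Function.Periodic.eq_zero_of_hasDerivAt_linear
    (fun t => congrArg V (hperT t)) hT ha hv (hsign.imp (fun h t => h _) fun h t => h _) h₀
  exact Or.inl (range_subset_iff.2 hvanish)

/-- Periodic orbits either lie in `{V = 0}` or avoid it, when the Dulac-type function
`M_s = V_x P + V_y Q - s (P_x + Q_y) V` does not change sign and vanishes on a null set. -/
theorem stmt_1 (P Q V : ℝ × ℝ → ℝ)
    (hP : ContDiff ℝ 1 P) (hQ : ContDiff ℝ 1 Q) (hV : ContDiff ℝ 1 V)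
    (s : ℝ) (hs : 0 < s)
    (M : ℝ × ℝ → ℝ)
    (hM : M = fun p => pdx V p * P p + pdy V p * Q p - s * (pdx P p + pdy Q p) * V p)
    (hsign : (∀ p, 0 ≤ M p) ∨ (∀ p, M p ≤ 0))
    (hnull : volume {p | M p = 0} = 0)
    (γ : ℝ → ℝ × ℝ) (hγ : IsSolution P Q γ) (hper : IsPeriodicSol γ) :
    Set.range γ ⊆ {p : ℝ × ℝ | V p = 0} ∨ Set.range γ ∩ {p : ℝ × ℝ | V p = 0} = ∅ :=
  stmt_1_general P Q V hP hQ hV s M hM hsign γ hγ hper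
end

section
/- Let P, Q : ℝ² → ℝ be C² functions and define K := Q²·P_y − P²·Q_x + P·Q·(P_x − Q_y). Then, identically on ℝ², K_x·P + K_y·Q − (P_x + Q_y)·K = P²·Q·(P_xx − 2·Q_xy) + P·Q²·(2·P_xy − Q_yy) + Q³·P_yy − P³·Q_xx. -/
open MeasureTheory

/-!
The partials `K_x`, `K_y` follow from the product rule along the coordinate lines. Once the
mixed partials are identified (`P_xy = P_yx`, `Q_xy = Q_yx`, by symmetry of the second derivative
of a `C²` map), the identity is a polynomial identity in `P`, `Q` and their partials.
-/

section PartialDerivatives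

variable {f : ℝ × ℝ → ℝ} {p : ℝ × ℝ}

lemma DifferentiableAt.hasDerivAt_pdx (hf : DifferentiableAt ℝ f p) :
    HasDerivAt (fun u => f (u, p.2)) (pdx f p) p.1 :=
  (hf.comp p.1 (differentiableAt_id.prodMk (differentiableAt_const _))).hasDerivAt

lemma DifferentiableAt.hasDerivAt_pdy (hf : DifferentiableAt ℝ f p) :
    HasDerivAt (fun v => f (p.1, v)) (pdy f p) p.2 :=
  (hf.comp p.2 ((differentiableAt_const _).prodMk differentiableAt_id)).hasDerivAt

lemma DifferentiableAt.pdx_eq_fderiv (hf : DifferentiableAt ℝ f p) :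
    pdx f p = fderiv ℝ f p (1, 0) :=
  (hf.hasFDerivAt.comp_hasDerivAt p.1 ((hasDerivAt_id p.1).prodMk (hasDerivAt_const _ _))).deriv

lemma DifferentiableAt.pdy_eq_fderiv (hf : DifferentiableAt ℝ f p) :
    pdy f p = fderiv ℝ f p (0, 1) :=
  (hf.hasFDerivAt.comp_hasDerivAt p.2 ((hasDerivAt_const _ _).prodMk (hasDerivAt_id p.2))).deriv

lemma Differentiable.pdx_eq_fderiv (hf : Differentiable ℝ f) :
    pdx f = fun q => fderiv ℝ f q (1, 0) :=
  funext fun q => (hf q).pdx_eq_fderiv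

lemma Differentiable.pdy_eq_fderiv (hf : Differentiable ℝ f) :
    pdy f = fun q => fderiv ℝ f q (0, 1) :=
  funext fun q => (hf q).pdy_eq_fderiv

lemma ContDiff.differentiable_fderiv (hf : ContDiff ℝ 2 f) :
    Differentiable ℝ (fderiv ℝ f) :=
  (hf.fderiv_right one_add_one_eq_two.le).differentiable one_ne_zero

lemma ContDiff.differentiable_pdx (hf : ContDiff ℝ 2 f) : Differentiable ℝ (pdx f) := by
  rw [(hf.differentiable two_ne_zero).pdx_eq_fderiv]
  exact hf.differentiable_fderiv.clm_apply (differentiable_const _)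

lemma ContDiff.differentiable_pdy (hf : ContDiff ℝ 2 f) : Differentiable ℝ (pdy f) := by
  rw [(hf.differentiable two_ne_zero).pdy_eq_fderiv]
  exact hf.differentiable_fderiv.clm_apply (differentiable_const _)

lemma ContDiff.pdx_pdy_comm (hf : ContDiff ℝ 2 f) (p : ℝ × ℝ) :
    pdx (pdy f) p = pdy (pdx f) p := by
  have hfd : Differentiable ℝ f := hf.differentiable two_ne_zero
  have hd2 := hf.differentiable_fderiv p
  have hxy : pdx (pdy f) p = fderiv ℝ (fderiv ℝ f) p (1, 0) (0, 1) := by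
    rw [(hf.differentiable_pdy p).pdx_eq_fderiv, hfd.pdy_eq_fderiv,
      fderiv_clm_apply hd2 (differentiableAt_const _)]
    simp
  have hyx : pdy (pdx f) p = fderiv ℝ (fderiv ℝ f) p (0, 1) (1, 0) := by
    rw [(hf.differentiable_pdx p).pdy_eq_fderiv, hfd.pdx_eq_fderiv,
      fderiv_clm_apply hd2 (differentiableAt_const _)]
    simp
  rw [hxy, hyx, hf.contDiffAt.isSymmSndFDerivAt (by simp) (1, 0) (0, 1)]

end PartialDerivatives

lemma HasDerivAt.curvature_numerator {P Q P₁ P₂ Q₁ Q₂ : ℝ → ℝ}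
    {P' Q' P₁' P₂' Q₁' Q₂' t : ℝ} (hP : HasDerivAt P P' t) (hQ : HasDerivAt Q Q' t)
    (hP₁ : HasDerivAt P₁ P₁' t) (hP₂ : HasDerivAt P₂ P₂' t)
    (hQ₁ : HasDerivAt Q₁ Q₁' t) (hQ₂ : HasDerivAt Q₂ Q₂' t) :
    HasDerivAt (fun s => Q s ^ 2 * P₂ s - P s ^ 2 * Q₁ s + P s * Q s * (P₁ s - Q₂ s))
      (2 * Q t * Q' * P₂ t + Q t ^ 2 * P₂' - (2 * P t * P' * Q₁ t + P t ^ 2 * Q₁')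
        + ((P' * Q t + P t * Q') * (P₁ t - Q₂ t) + P t * Q t * (P₁' - Q₂'))) t :=
  ((((hQ.fun_pow 2).fun_mul hP₂).fun_sub ((hP.fun_pow 2).fun_mul hQ₁)).fun_add
    ((hP.fun_mul hQ).fun_mul (hP₁.fun_sub hQ₂))).congr_deriv (by ring)

lemma pdx_curvature_numerator {P Q P₁ P₂ Q₁ Q₂ : ℝ × ℝ → ℝ} {p : ℝ × ℝ}
    (hP : DifferentiableAt ℝ P p) (hQ : DifferentiableAt ℝ Q p)
    (hP₁ : DifferentiableAt ℝ P₁ p) (hP₂ : DifferentiableAt ℝ P₂ p)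
    (hQ₁ : DifferentiableAt ℝ Q₁ p) (hQ₂ : DifferentiableAt ℝ Q₂ p) :
    pdx (fun q => Q q ^ 2 * P₂ q - P q ^ 2 * Q₁ q + P q * Q q * (P₁ q - Q₂ q)) p =
      2 * Q p * pdx Q p * P₂ p + Q p ^ 2 * pdx P₂ p
        - (2 * P p * pdx P p * Q₁ p + P p ^ 2 * pdx Q₁ p)
        + ((pdx P p * Q p + P p * pdx Q p) * (P₁ p - Q₂ p)
          + P p * Q p * (pdx P₁ p - pdx Q₂ p)) :=
  (HasDerivAt.curvature_numerator hP.hasDerivAt_pdx hQ.hasDerivAt_pdx hP₁.hasDerivAt_pdx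
    hP₂.hasDerivAt_pdx hQ₁.hasDerivAt_pdx hQ₂.hasDerivAt_pdx).deriv

lemma pdy_curvature_numerator {P Q P₁ P₂ Q₁ Q₂ : ℝ × ℝ → ℝ} {p : ℝ × ℝ}
    (hP : DifferentiableAt ℝ P p) (hQ : DifferentiableAt ℝ Q p)
    (hP₁ : DifferentiableAt ℝ P₁ p) (hP₂ : DifferentiableAt ℝ P₂ p)
    (hQ₁ : DifferentiableAt ℝ Q₁ p) (hQ₂ : DifferentiableAt ℝ Q₂ p) :
    pdy (fun q => Q q ^ 2 * P₂ q - P q ^ 2 * Q₁ q + P q * Q q * (P₁ q - Q₂ q)) p =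
      2 * Q p * pdy Q p * P₂ p + Q p ^ 2 * pdy P₂ p
        - (2 * P p * pdy P p * Q₁ p + P p ^ 2 * pdy Q₁ p)
        + ((pdy P p * Q p + P p * pdy Q p) * (P₁ p - Q₂ p)
          + P p * Q p * (pdy P₁ p - pdy Q₂ p)) :=
  (HasDerivAt.curvature_numerator hP.hasDerivAt_pdy hQ.hasDerivAt_pdy hP₁.hasDerivAt_pdy
    hP₂.hasDerivAt_pdy hQ₁.hasDerivAt_pdy hQ₂.hasDerivAt_pdy).deriv

/-- For the curvature function `K = Q² P_y − P² Q_x + P Q (P_x − Q_y)` of a `C²` vector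
field `(P,Q)`, the Dulac-type combination `K_x P + K_y Q − (P_x + Q_y) K` equals
`P² Q (P_xx − 2 Q_xy) + P Q² (2 P_xy − Q_yy) + Q³ P_yy − P³ Q_xx` identically. -/
theorem stmt_2 (P Q : ℝ × ℝ → ℝ) (hP : ContDiff ℝ 2 P) (hQ : ContDiff ℝ 2 Q)
    (K : ℝ × ℝ → ℝ)
    (hK : K = fun p => Q p ^ 2 * pdy P p - P p ^ 2 * pdx Q p
      + P p * Q p * (pdx P p - pdy Q p)) :
    ∀ p : ℝ × ℝ,
      pdx K p * P p + pdy K p * Q p - (pdx P p + pdy Q p) * K p =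
        P p ^ 2 * Q p * (pdx (pdx P) p - 2 * pdx (pdy Q) p)
        + P p * Q p ^ 2 * (2 * pdx (pdy P) p - pdy (pdy Q) p)
        + Q p ^ 3 * pdy (pdy P) p - P p ^ 3 * pdx (pdx Q) p := by
  intro p
  have hPd := hP.differentiable two_ne_zero p
  have hQd := hQ.differentiable two_ne_zero p
  subst hK
  rw [pdx_curvature_numerator hPd hQd (hP.differentiable_pdx p) (hP.differentiable_pdy p)
      (hQ.differentiable_pdx p) (hQ.differentiable_pdy p),
    pdy_curvature_numerator hPd hQd (hP.differentiable_pdx p) (hP.differentiable_pdy p)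
      (hQ.differentiable_pdx p) (hQ.differentiable_pdy p),
    hP.pdx_pdy_comm, hQ.pdx_pdy_comm]
  ring
end

section
/- Let B : ℝ → ℝ be a C¹ function, and set P(x,y) = y − (x²−1)·B(x), Q(x,y) = −x·(1 + y·B(x)), and V(x,y) = (1 − x² − y²)·(x² + y² + B(x)·y). Then, identically on ℝ², V_x·P + V_y·Q − (P_x + Q_y)·V = x·(x² + y² − 1)²·(B(x) − x·B'(x)). -/
open MeasureTheory

section
variable {B : ℝ → ℝ} {x y : ℝ}

theorem pdx_lienardP (hB : DifferentiableAt ℝ B x) :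
    pdx (fun p => p.2 - (p.1 ^ 2 - 1) * B p.1) (x, y) =
      -(2 * x * B x + (x ^ 2 - 1) * deriv B x) := by
  have h := (hasDerivAt_const x y).sub (((hasDerivAt_pow 2 x).sub_const 1).mul hB.hasDerivAt)
  exact h.deriv.trans (by ring)

theorem pdy_lienardQ :
    pdy (fun p => -(p.1 * (1 + p.2 * B p.1))) (x, y) = -(x * B x) := by
  have h := ((((hasDerivAt_id y).mul_const (B x)).const_add 1).const_mul x).neg
  exact h.deriv.trans (by ring)

theorem pdx_lienardV (hB : DifferentiableAt ℝ B x) :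
    pdx (fun p => (1 - p.1 ^ 2 - p.2 ^ 2) * (p.1 ^ 2 + p.2 ^ 2 + B p.1 * p.2)) (x, y) =
      -(2 * x) * (x ^ 2 + y ^ 2 + B x * y) + (1 - x ^ 2 - y ^ 2) * (2 * x + deriv B x * y) := by
  have h := (((hasDerivAt_pow 2 x).const_sub 1).sub_const (y ^ 2)).mul
    (((hasDerivAt_pow 2 x).add_const (y ^ 2)).add (hB.hasDerivAt.mul_const y))
  exact h.deriv.trans (by simp only [Pi.add_apply]; ring)

theorem pdy_lienardV :
    pdy (fun p => (1 - p.1 ^ 2 - p.2 ^ 2) * (p.1 ^ 2 + p.2 ^ 2 + B p.1 * p.2)) (x, y) =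
      -(2 * y) * (x ^ 2 + y ^ 2 + B x * y) + (1 - x ^ 2 - y ^ 2) * (2 * y + B x) := by
  have h := ((hasDerivAt_pow 2 y).const_sub (1 - x ^ 2)).mul
    (((hasDerivAt_pow 2 y).const_add (x ^ 2)).add ((hasDerivAt_id y).const_mul (B x)))
  exact h.deriv.trans (by simp only [Pi.add_apply, id]; ring)
end

/-- The Dulac identity for the Liénard-type system with invariant unit circle:
with `V = (1 − x² − y²)(x² + y² + B(x) y)` one has
`V_x P + V_y Q − (P_x + Q_y) V = x (x² + y² − 1)² (B(x) − x B'(x))`. -/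
theorem stmt_4 (B : ℝ → ℝ) (hB : ContDiff ℝ 1 B)
    (P Q V : ℝ × ℝ → ℝ)
    (hP : P = fun p => p.2 - (p.1 ^ 2 - 1) * B p.1)
    (hQ : Q = fun p => -(p.1 * (1 + p.2 * B p.1)))
    (hV : V = fun p => (1 - p.1 ^ 2 - p.2 ^ 2) * (p.1 ^ 2 + p.2 ^ 2 + B p.1 * p.2)) :
    ∀ p : ℝ × ℝ,
      pdx V p * P p + pdy V p * Q p - (pdx P p + pdy Q p) * V p =
        p.1 * (p.1 ^ 2 + p.2 ^ 2 - 1) ^ 2 * (B p.1 - p.1 * deriv B p.1) := by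
  subst hP hQ hV
  rintro ⟨x, y⟩
  have hBx : DifferentiableAt ℝ B x := hB.differentiable one_ne_zero x
  rw [pdx_lienardV hBx, pdy_lienardV, pdx_lienardP hBx, pdy_lienardQ]
  ring
end

section
/- Let b ≤ 0 and consider the system ẋ = y − (x²−1)·(x³−bx), ẏ = −x·(1 + y·(x³−bx)). Then every nonconstant periodic solution of this system has image equal to the unit circle {(x,y) : x² + y² = 1}. -/
open MeasureTheory

/-!
Along a solution, `F = x² + y² - 1` satisfies `F' = -2x²(x² - b) F`. For `b ≤ 0` the factor
`x²(x² - b)` is nonnegative, so `F²` is nonincreasing and, being periodic, constant. Hence either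
`F ≡ 0`, or `x²(x² - b) ≡ 0`, which forces `x ≡ 0` and then `y = ẋ ≡ 0`, a constant solution.

On the unit circle the system is a rotation `(x, y) = (cos θ, sin θ)` with
`θ' = ω(cos θ, sin θ)`, `ω = angularSpeed b`, and since `θ'` is `T`-periodic,
`θ(t + T) = θ(t) + c`. If `c ≠ 0`, `θ` takes every real value and the orbit is the whole circle.
If `c = 0`, `θ` is a periodic solution of an autonomous scalar ODE: at its maximum it sits at an
equilibrium, so by uniqueness it is constant, and so is the solution.
-/

open Real Set Function

theorem HasDerivAt.fst {𝕜 E F : Type*} [NontriviallyNormedField 𝕜] [NormedAddCommGroup E]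
    [NormedSpace 𝕜 E] [NormedAddCommGroup F] [NormedSpace 𝕜 F] {γ : 𝕜 → E × F} {v : E × F}
    {t : 𝕜} (h : HasDerivAt γ v t) : HasDerivAt (fun s => (γ s).1) v.1 t :=
  (hasFDerivAt_fst (𝕜 := 𝕜) (E := E) (F := F) (p := γ t)).comp_hasDerivAt t h

theorem HasDerivAt.snd {𝕜 E F : Type*} [NontriviallyNormedField 𝕜] [NormedAddCommGroup E]
    [NormedSpace 𝕜 E] [NormedAddCommGroup F] [NormedSpace 𝕜 F] {γ : 𝕜 → E × F} {v : E × F}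
    {t : 𝕜} (h : HasDerivAt γ v t) : HasDerivAt (fun s => (γ s).2) v.2 t :=
  (hasFDerivAt_snd (𝕜 := 𝕜) (E := E) (F := F) (p := γ t)).comp_hasDerivAt t h

theorem Function.Periodic.eq_of_antitone {α : Type*} [PartialOrder α] {f : ℝ → α} {T : ℝ}
    (hf : Periodic f T) (hT : 0 < T) (hanti : Antitone f) (t s : ℝ) : f t = f s := by
  obtain ⟨n, hn⟩ := exists_nat_ge (|t - s| / T)
  have hnT : |t - s| ≤ n * T := (div_le_iff₀ hT).1 hn
  have hts : f (t + n * T) ≤ f s := hanti (by linarith [neg_abs_le (t - s), le_abs_self (t - s)])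
  have hst : f (s + n * T) ≤ f t := hanti (by linarith [neg_abs_le (t - s), le_abs_self (t - s)])
  rw [hf.nat_mul n] at hts hst
  exact le_antisymm hts hst

theorem Function.Periodic.eq_zero_or_eq_zero_of_hasDerivAt_neg_mul {F a : ℝ → ℝ} {T : ℝ}
    (hper : Periodic F T) (hT : 0 < T) (hF : ∀ t, HasDerivAt F (-(a t * F t)) t)
    (ha : ∀ t, 0 ≤ a t) : (∀ t, F t = 0) ∨ ∀ t, a t = 0 := by
  have hsq : ∀ t, HasDerivAt (fun s => F s ^ 2) (-(2 * a t * F t ^ 2)) t := fun t =>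
    ((hF t).pow 2).congr_deriv (by ring)
  have hanti : Antitone fun s => F s ^ 2 := antitone_of_hasDerivAt_nonpos hsq fun t => by
    simp only [Pi.zero_apply]
    nlinarith [ha t, sq_nonneg (F t)]
  have hconst : ∀ t, F t ^ 2 = F 0 ^ 2 := fun t =>
    (hper.comp fun u => u ^ 2).eq_of_antitone hT hanti t 0
  have hflat : ∀ t, a t * F 0 ^ 2 = 0 := fun t => by
    have h := (hsq t).unique <| (hasDerivAt_const t (F 0 ^ 2)).congr_of_eventuallyEq
      (Filter.Eventually.of_forall hconst)
    rw [hconst t] at h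
    linarith
  by_cases h0 : F 0 = 0
  · left
    intro t
    simpa [h0] using hconst t
  · right
    intro t
    simpa [h0] using hflat t

theorem exists_cos_sin_eq {u v : ℝ} (h : u ^ 2 + v ^ 2 = 1) : ∃ a : ℝ, cos a = u ∧ sin a = v := by
  have hnorm : ‖(⟨u, v⟩ : ℂ)‖ = 1 := by
    rw [Complex.norm_def, Complex.normSq_mk, ← sq, ← sq, h, Real.sqrt_one]
  obtain ⟨a, ha⟩ := (Complex.norm_eq_one_iff _).1 hnorm
  refine ⟨a, ?_, ?_⟩
  · simpa [Complex.exp_mul_I, ← Complex.ofReal_cos, ← Complex.ofReal_sin] using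
      congrArg Complex.re ha
  · simpa [Complex.exp_mul_I, ← Complex.ofReal_cos, ← Complex.ofReal_sin] using
      congrArg Complex.im ha

theorem exists_angle_of_hasDerivAt_rotation {γ : ℝ → ℝ × ℝ} {ω : ℝ → ℝ} (hω : Continuous ω)
    (hγ : ∀ t, HasDerivAt γ (-(ω t * (γ t).2), ω t * (γ t).1) t)
    (h0 : (γ 0).1 ^ 2 + (γ 0).2 ^ 2 = 1) :
    ∃ θ : ℝ → ℝ, (∀ t, HasDerivAt θ (ω t) t) ∧ ∀ t, γ t = (cos (θ t), sin (θ t)) := by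
  obtain ⟨A, hA⟩ := exists_cos_sin_eq h0
  set θ : ℝ → ℝ := fun u => A + ∫ s in (0 : ℝ)..u, ω s with hθ_def
  have hθ : ∀ t, HasDerivAt θ (ω t) t := fun t =>
    (hω.integral_hasStrictDerivAt 0 t).hasDerivAt.const_add A
  refine ⟨θ, hθ, fun t => ?_⟩
  set D : ℝ → ℝ := fun u => ((γ u).1 - cos (θ u)) ^ 2 + ((γ u).2 - sin (θ u)) ^ 2
  have hD : ∀ t, HasDerivAt D 0 t := fun t =>
    ((((hγ t).fst.sub (hθ t).cos).pow 2).add (((hγ t).snd.sub (hθ t).sin).pow 2)).congr_deriv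
      (by simp only [Pi.sub_apply]; ring)
  have hD0 : D 0 = 0 := by simp [D, hθ_def, hA]
  have hDt : D t = 0 := (is_const_of_deriv_eq_zero (fun t => (hD t).differentiableAt)
    (fun t => (hD t).deriv) t 0).trans hD0
  obtain ⟨h1, h2⟩ : (γ t).1 - cos (θ t) = 0 ∧ (γ t).2 - sin (θ t) = 0 := by
    constructor <;> nlinarith [sq_nonneg ((γ t).1 - cos (θ t)), sq_nonneg ((γ t).2 - sin (θ t))]
  exact Prod.ext (by linarith) (by linarith)

theorem exists_forall_add_period_eq_add {θ ω : ℝ → ℝ} {T : ℝ} (hθ : ∀ t, HasDerivAt θ (ω t) t)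
    (hω : Periodic ω T) : ∃ c, ∀ t, θ (t + T) = θ t + c := by
  have hd : ∀ t, HasDerivAt (fun s => θ (s + T) - θ s) 0 t := fun t =>
    (((hθ (t + T)).comp_add_const t T).sub (hθ t)).congr_deriv (by rw [hω t, sub_self])
  refine ⟨θ T - θ 0, fun t => ?_⟩
  have := is_const_of_deriv_eq_zero (fun t => (hd t).differentiableAt) (fun t => (hd t).deriv) t 0
  simp only [zero_add] at this
  linarith

theorem surjective_of_forall_add_period_eq_add {θ : ℝ → ℝ} {T c : ℝ} (hθ : Continuous θ)
    (hc : c ≠ 0) (h : ∀ t, θ (t + T) = θ t + c) : Surjective θ := by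
  have hmul : ∀ (n : ℕ) t, θ (t + n * T) = θ t + n * c := by
    intro n
    induction n with
    | zero => simp
    | succ n ih =>
      intro t
      rw [show t + ↑(n + 1) * T = t + n * T + T by push_cast; ring, h, ih]
      push_cast
      ring
  intro a
  obtain ⟨n, hn⟩ := exists_nat_ge (|a - θ 0| / |c|)
  have hna := abs_le.1 ((div_le_iff₀ (abs_pos.2 hc)).1 hn)
  have hlo : θ (-(n * T)) = θ 0 - n * c := by
    have := hmul n (-(n * T))
    rw [neg_add_cancel] at this
    linarith
  have hhi : θ (n * T) = θ 0 + n * c := by simpa using hmul n 0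
  have ha : a ∈ uIcc (θ (-(n * T))) (θ (n * T)) := by
    rw [hlo, hhi, mem_uIcc]
    rcases le_total 0 c with h0 | h0
    · rw [abs_of_nonneg h0] at hna
      exact Or.inl ⟨by linarith, by linarith⟩
    · rw [abs_of_nonpos h0] at hna
      exact Or.inr ⟨by linarith, by linarith⟩
  obtain ⟨t, -, ht⟩ := intermediate_value_uIcc hθ.continuousOn ha
  exact ⟨t, ht⟩

theorem Function.Periodic.eq_of_hasDerivAt_comp {θ f : ℝ → ℝ} {T : ℝ} (hper : Periodic θ T)
    (hT : T ≠ 0) (hf : ContDiff ℝ 1 f) (hθ : ∀ t, HasDerivAt θ (f (θ t)) t) (t s : ℝ) :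
    θ t = θ s := by
  have hθc : Continuous θ := continuous_iff_continuousAt.2 fun t => (hθ t).continuousAt
  have hcpt := hper.compact_of_continuous hT hθc
  obtain ⟨_, ⟨t₀, rfl⟩, hmax⟩ := hcpt.exists_isGreatest (range_nonempty θ)
  have hstat : f (θ t₀) = 0 :=
    IsLocalMax.hasDerivAt_eq_zero (Filter.Eventually.of_forall fun t => hmax ⟨t, rfl⟩) (hθ t₀)
  obtain ⟨K, hK⟩ := hf.locallyLipschitz.locallyLipschitzOn.exists_lipschitzOnWith_of_compact hcpt
  have hconst : θ = fun _ => θ t₀ :=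
    ODE_solution_unique_univ (v := fun _ => f) (s := fun _ => range θ) (t₀ := t₀)
      (fun _ => hK) (fun t => ⟨hθ t, t, rfl⟩)
      (fun t => ⟨by simpa [hstat] using hasDerivAt_const t (θ t₀), t₀, rfl⟩) rfl
  exact (congrFun hconst t).trans (congrFun hconst s).symm

theorem sq_add_sq_eq_one_of_periodic {b T : ℝ} (hb : b ≤ 0) {γ : ℝ → ℝ × ℝ}
    (hγ : IsSolution (fun p => p.2 - (p.1 ^ 2 - 1) * (p.1 ^ 3 - b * p.1))
      (fun p => -(p.1 * (1 + p.2 * (p.1 ^ 3 - b * p.1)))) γ)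
    (hT : 0 < T) (hper : Periodic γ T) (hnc : IsNonconstant γ) (t : ℝ) :
    (γ t).1 ^ 2 + (γ t).2 ^ 2 = 1 := by
  have hF : ∀ t, HasDerivAt (fun s => (γ s).1 ^ 2 + (γ s).2 ^ 2 - 1)
      (-(2 * ((γ t).1 ^ 2 * ((γ t).1 ^ 2 - b)) * ((γ t).1 ^ 2 + (γ t).2 ^ 2 - 1))) t := fun t =>
    ((((hγ t).fst.pow 2).add ((hγ t).snd.pow 2)).sub_const 1).congr_deriv (by ring)
  rcases (hper.comp fun p => p.1 ^ 2 + p.2 ^ 2 - 1).eq_zero_or_eq_zero_of_hasDerivAt_neg_mul hT hF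
      (fun t => by nlinarith [sq_nonneg ((γ t).1), sq_nonneg ((γ t).1 ^ 2)]) with h | h
  · exact sub_eq_zero.1 (h t : (γ t).1 ^ 2 + (γ t).2 ^ 2 - 1 = 0)
  · have hx : ∀ t, (γ t).1 = 0 := fun t =>
      pow_eq_zero_iff (n := 4) (by norm_num) |>.1 (by nlinarith [h t, sq_nonneg ((γ t).1)])
    have hy : ∀ t, (γ t).2 = 0 := fun t => by
      have hx' := (hγ t).fst
      rw [show (fun s => (γ s).1) = fun _ => 0 from funext hx] at hx'
      simpa [hx t] using hx'.unique (hasDerivAt_const t 0)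
    obtain ⟨t₁, t₂, hne⟩ := hnc
    exact (hne (Prod.ext (by rw [hx, hx]) (by rw [hy, hy]))).elim

def angularSpeed (b : ℝ) (p : ℝ × ℝ) : ℝ := -(1 + p.1 * p.2 * (p.1 ^ 2 - b))

theorem hasDerivAt_rotation_of_sq_add_sq_eq_one {b : ℝ} {γ : ℝ → ℝ × ℝ}
    (hγ : IsSolution (fun p => p.2 - (p.1 ^ 2 - 1) * (p.1 ^ 3 - b * p.1))
      (fun p => -(p.1 * (1 + p.2 * (p.1 ^ 3 - b * p.1)))) γ)
    (hcirc : ∀ t, (γ t).1 ^ 2 + (γ t).2 ^ 2 = 1) (t : ℝ) :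
    HasDerivAt γ (-(angularSpeed b (γ t) * (γ t).2), angularSpeed b (γ t) * (γ t).1) t := by
  convert hγ t using 2
  · simp only [angularSpeed]
    linear_combination ((γ t).1 * ((γ t).1 ^ 2 - b)) * hcirc t
  · simp only [angularSpeed]
    ring

/-- For `b ≤ 0`, every nonconstant periodic solution of
`ẋ = y − (x²−1)(x³−bx)`, `ẏ = −x(1 + y(x³−bx))` has the unit circle as its image. -/
theorem stmt_6 (b : ℝ) (hb : b ≤ 0)
    (γ : ℝ → ℝ × ℝ)
    (hγ : IsSolution (fun p => p.2 - (p.1 ^ 2 - 1) * (p.1 ^ 3 - b * p.1))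
      (fun p => -(p.1 * (1 + p.2 * (p.1 ^ 3 - b * p.1)))) γ)
    (hper : IsPeriodicSol γ) (hnc : IsNonconstant γ) :
    Set.range γ = {p : ℝ × ℝ | p.1 ^ 2 + p.2 ^ 2 = 1} := by
  obtain ⟨T, hT, hperT⟩ : ∃ T > 0, Periodic γ T := hper
  have hcirc := sq_add_sq_eq_one_of_periodic hb hγ hT hperT hnc
  have hω : Continuous fun t => angularSpeed b (γ t) := by
    have : Continuous γ := continuous_iff_continuousAt.2 fun t => (hγ t).continuousAt
    unfold angularSpeed
    fun_prop
  obtain ⟨θ, hθ, hγθ⟩ := exists_angle_of_hasDerivAt_rotation hω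
    (hasDerivAt_rotation_of_sq_add_sq_eq_one hγ hcirc) (hcirc 0)
  obtain ⟨c, hc⟩ := exists_forall_add_period_eq_add hθ (hperT.comp (angularSpeed b))
  have hsurj : Surjective θ := by
    refine surjective_of_forall_add_period_eq_add
      (continuous_iff_continuousAt.2 fun t => (hθ t).continuousAt) (fun hc0 => ?_) hc
    have hθper : Periodic θ T := fun t => by simpa [hc0] using hc t
    have hθode : ∀ t, HasDerivAt θ (angularSpeed b (cos (θ t), sin (θ t))) t :=
      fun t => hγθ t ▸ hθ t
    have hsmooth : ContDiff ℝ 1 fun a => angularSpeed b (cos a, sin a) := by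
      unfold angularSpeed
      fun_prop
    obtain ⟨t, s, hts⟩ := hnc
    refine hts ?_
    rw [hγθ t, hγθ s, hθper.eq_of_hasDerivAt_comp hT.ne' hsmooth hθode t s]
  ext p
  refine ⟨fun ⟨t, ht⟩ => ht ▸ hcirc t, fun hp => ?_⟩
  obtain ⟨a, ha⟩ := exists_cos_sin_eq hp
  obtain ⟨t, rfl⟩ := hsurj a
  exact ⟨t, (hγθ t).trans (Prod.ext ha.1 ha.2)⟩
end

section
/- Let m ≥ 2 be an integer and let a, g be real numbers. Then the set {y ∈ ℝ : g + y² − a·y·|y|^m = 0} has at most 3 elements. -/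
/-!
Write `T_b(t) = g + t² - b t^(m+1)`. For `y ≥ 0` the equation reads `T_a(y) = 0`, and for `y ≤ 0`
it reads `T_{-a}(-y) = 0`, so it suffices to count the zeros of `T_a` and `T_{-a}` on `[0, ∞)`.
If `b ≤ 0`, then `T_b` is strictly increasing there. If `b > 0`, then
`T_b'(t) = t (2 - b (m+1) t^(m-1))` changes sign exactly once, at the point `c` where
`b (m+1) c^(m-1) = 2`, so `T_b` is strictly increasing on `[0, c]` and strictly decreasing on
`[c, ∞)`. Since one of `a`, `-a` is `≤ 0`, there are at most `1 + 2` zeros.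
-/

open Set

lemma encard_zeros_inter_le_one_of_injOn {α β : Type*} [Zero β] {f : α → β} {s : Set α}
    (hf : InjOn f s) : ({x | f x = 0} ∩ s).encard ≤ 1 :=
  encard_le_one_iff.2 fun _ _ hx hy => hf hx.2 hy.2 (hx.1.trans hy.1.symm)

def trinomial (m : ℕ) (b g t : ℝ) : ℝ := g + t ^ 2 - b * t ^ (m + 1)

lemma hasDerivAt_trinomial (m : ℕ) (b g t : ℝ) :
    HasDerivAt (trinomial m b g) (2 * t - b * (m + 1) * t ^ m) t := by
  refine (((hasDerivAt_pow 2 t).const_add g).sub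
    ((hasDerivAt_pow (m + 1) t).const_mul b)).congr_deriv ?_
  simp only [Nat.add_sub_cancel]
  push_cast
  ring

lemma continuous_trinomial (m : ℕ) (b g : ℝ) : Continuous (trinomial m b g) := by
  unfold trinomial
  fun_prop

lemma strictMonoOn_trinomial_of_nonpos (m : ℕ) {b : ℝ} (hb : b ≤ 0) (g : ℝ) :
    StrictMonoOn (trinomial m b g) (Ici 0) := by
  refine strictMonoOn_of_deriv_pos (convex_Ici 0) (continuous_trinomial m b g).continuousOn
    fun t ht => ?_
  rw [interior_Ici, mem_Ioi] at ht
  rw [(hasDerivAt_trinomial m b g t).deriv]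
  have : 0 ≤ -b * (m + 1) * t ^ m := by
    have := neg_nonneg.2 hb
    positivity
  linarith

lemma two_mul_sub_mul_pow_eq_mul {m : ℕ} (hm : 1 ≤ m) (b t : ℝ) :
    2 * t - b * (m + 1) * t ^ m = t * (2 - b * (m + 1) * t ^ (m - 1)) := by
  obtain ⟨k, rfl⟩ := Nat.exists_eq_add_of_le' hm
  simp only [Nat.add_sub_cancel]
  ring

lemma strictMonoOn_trinomial_Icc {m : ℕ} (hm : 2 ≤ m) {b c : ℝ} (hb : 0 < b)
    (hc : b * (m + 1) * c ^ (m - 1) = 2) (g : ℝ) :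
    StrictMonoOn (trinomial m b g) (Icc 0 c) := by
  refine strictMonoOn_of_deriv_pos (convex_Icc 0 c) (continuous_trinomial m b g).continuousOn
    fun t ht => ?_
  rw [interior_Icc] at ht
  rw [(hasDerivAt_trinomial m b g t).deriv, two_mul_sub_mul_pow_eq_mul (by omega)]
  have : t ^ (m - 1) < c ^ (m - 1) := pow_lt_pow_left₀ ht.2 ht.1.le (by omega)
  have : b * (m + 1) * t ^ (m - 1) < 2 := by
    rw [← hc]
    gcongr
  exact mul_pos ht.1 (by linarith)

lemma strictAntiOn_trinomial_Ici {m : ℕ} (hm : 2 ≤ m) {b c : ℝ} (hb : 0 < b) (hc0 : 0 ≤ c)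
    (hc : b * (m + 1) * c ^ (m - 1) = 2) (g : ℝ) :
    StrictAntiOn (trinomial m b g) (Ici c) := by
  refine strictAntiOn_of_deriv_neg (convex_Ici c) (continuous_trinomial m b g).continuousOn
    fun t ht => ?_
  rw [interior_Ici, mem_Ioi] at ht
  rw [(hasDerivAt_trinomial m b g t).deriv, two_mul_sub_mul_pow_eq_mul (by omega)]
  have : c ^ (m - 1) < t ^ (m - 1) := pow_lt_pow_left₀ ht hc0 (by omega)
  have : 2 < b * (m + 1) * t ^ (m - 1) := by
    rw [← hc]
    gcongr
  exact mul_neg_of_pos_of_neg (hc0.trans_lt ht) (by linarith)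

lemma exists_mul_pow_eq_two {m : ℕ} (hm : 2 ≤ m) {b : ℝ} (hb : 0 < b) :
    ∃ c : ℝ, 0 ≤ c ∧ b * (m + 1) * c ^ (m - 1) = 2 := by
  have hx : 0 ≤ 2 / (b * (m + 1)) := by positivity
  refine ⟨(2 / (b * (m + 1))) ^ ((m - 1 : ℕ) : ℝ)⁻¹, by positivity, ?_⟩
  rw [Real.rpow_inv_natCast_pow hx (by omega)]
  field_simp

lemma encard_zeros_trinomial_le_one_of_nonpos (m : ℕ) {b : ℝ} (hb : b ≤ 0) (g : ℝ) :
    ({t | trinomial m b g t = 0} ∩ Ici 0).encard ≤ 1 :=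
  encard_zeros_inter_le_one_of_injOn (strictMonoOn_trinomial_of_nonpos m hb g).injOn

lemma encard_zeros_trinomial_le_two {m : ℕ} (hm : 2 ≤ m) (b g : ℝ) :
    ({t | trinomial m b g t = 0} ∩ Ici 0).encard ≤ 2 := by
  rcases le_or_gt b 0 with hb | hb
  · exact (encard_zeros_trinomial_le_one_of_nonpos m hb g).trans one_le_two
  obtain ⟨c, hc0, hc⟩ := exists_mul_pow_eq_two hm hb
  rw [← Icc_union_Ici_eq_Ici hc0, inter_union_distrib_left]
  calc _ ≤ _ := encard_union_le _ _
    _ ≤ 1 + 1 := add_le_add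
        (encard_zeros_inter_le_one_of_injOn (strictMonoOn_trinomial_Icc hm hb hc g).injOn)
        (encard_zeros_inter_le_one_of_injOn (strictAntiOn_trinomial_Ici hm hb hc0 hc g).injOn)
    _ = 2 := one_add_one_eq_two

lemma zeros_subset_union_neg (m : ℕ) (a g : ℝ) :
    {y : ℝ | g + y ^ 2 - a * y * |y| ^ m = 0} ⊆ ({t | trinomial m a g t = 0} ∩ Ici 0) ∪
      Neg.neg '' ({t | trinomial m (-a) g t = 0} ∩ Ici 0) := by
  intro y hy
  rcases le_total 0 y with hy0 | hy0
  · refine Or.inl ⟨?_, hy0⟩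
    rw [mem_ofPred_eq, abs_of_nonneg hy0] at hy
    simp only [mem_ofPred_eq, trinomial]
    linear_combination hy
  · refine Or.inr ⟨-y, ⟨?_, neg_nonneg.2 hy0⟩, neg_neg y⟩
    rw [mem_ofPred_eq, abs_of_nonpos hy0] at hy
    simp only [mem_ofPred_eq, trinomial]
    linear_combination hy

/-- For `m ≥ 2`, the set `{y : g + y² − a y |y|^m = 0}` has at most 3 elements. -/
theorem stmt_10 (m : ℕ) (hm : 2 ≤ m) (a g : ℝ) :
    {y : ℝ | g + y ^ 2 - a * y * |y| ^ m = 0}.encard ≤ 3 := by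
  calc _ ≤ _ := encard_mono (zeros_subset_union_neg m a g)
    _ ≤ ({t | trinomial m a g t = 0} ∩ Ici 0).encard +
        ({t | trinomial m (-a) g t = 0} ∩ Ici 0).encard :=
      (encard_union_le _ _).trans (add_le_add_right (encard_image_le _ _) _)
    _ ≤ 3 := by
      rcases le_total a 0 with ha | ha
      · calc _ ≤ (1 : ℕ∞) + 2 := add_le_add (encard_zeros_trinomial_le_one_of_nonpos m ha g)
              (encard_zeros_trinomial_le_two hm (-a) g)
          _ = 3 := rfl
      · calc _ ≤ (2 : ℕ∞) + 1 := add_le_add (encard_zeros_trinomial_le_two hm a g)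
              (encard_zeros_trinomial_le_one_of_nonpos m (neg_nonpos.2 ha) g)
          _ = 3 := rfl
end

section
/- Let F(x,y) = a + b·x + c·y + d·x² + e·x·y + h·y² with real coefficients satisfying 4·d·h − e² > 0. Then the rigid cubic system ẋ = −y + x·F(x,y), ẏ = x + y·F(x,y) has at most one periodic orbit; that is, any two nonconstant periodic solutions have the same image. -/
open MeasureTheory

/-!
The angle of a rigid system grows at unit speed, so in polar coordinates it becomes the scalar
equation `r' = r F(r cos θ, r sin θ)`;
for the cubic `F` this is the Abel equation `r' = a r + (b cos θ + c sin θ) r² + S(θ) r³`, where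
`S(θ) = d cos² θ + e cos θ sin θ + h sin² θ` never vanishes because `4dh - e² > 0`.
A periodic orbit is the polar graph of a positive periodic solution. Two solutions never cross, and
`r(θ) ↦ -r(θ + π)` maps solutions to solutions, so two distinct positive periodic solutions
`σ₁ < σ₂` yield four ordered periodic solutions `x₁ < x₂ < x₃ < x₄`, namely
`-σ₂(θ + π) < -σ₁(θ + π) < σ₁(θ) < σ₂(θ)`. Along an Abel equation the logarithm of the cross
ratio of four solutions has derivative `S (x₄ - x₃)(x₂ - x₁)`, which has constant sign: this
contradicts periodicity.
-/

open Real
open scoped Complex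
open Complex (I equivRealProdCLM)

theorem eq_mul_cexp_sub_of_hasDerivAt {z w g : ℝ → ℂ}
    (hz : ∀ t, HasDerivAt z (g t * z t) t) (hw : ∀ t, HasDerivAt w (g t) t) (t : ℝ) :
    z t = z 0 * cexp (w t - w 0) := by
  have hconst : ∀ u, HasDerivAt (fun u => z u * cexp (-w u)) 0 u := fun u =>
    ((hz u).mul (hw u).neg.cexp).congr_deriv (by ring)
  have h := is_const_of_deriv_eq_zero (fun u => (hconst u).differentiableAt)
    (fun u => (hconst u).deriv) t 0
  calc z t = z t * cexp (-w t) * cexp (w t) := by rw [mul_assoc, ← Complex.exp_add]; simp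
    _ = z 0 * cexp (w t - w 0) := by rw [h, mul_assoc, ← Complex.exp_add]; ring_nf

theorem eq_mul_exp_integral_of_hasDerivAt {D G : ℝ → ℝ} (hG : Continuous G)
    (hD : ∀ t, HasDerivAt D (G t * D t) t) (t : ℝ) :
    D t = D 0 * exp (∫ s in (0 : ℝ)..t, G s) := by
  have hA : ∀ u, HasDerivAt (fun u => ((∫ s in (0 : ℝ)..u, G s : ℝ) : ℂ)) (G u : ℂ) u :=
    fun u => (hG.integral_hasStrictDerivAt 0 u).hasDerivAt.ofReal_comp
  have h := eq_mul_cexp_sub_of_hasDerivAt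
    (fun u => ((hD u).ofReal_comp).congr_deriv (by push_cast; ring)) hA t
  rw [intervalIntegral.integral_same, Complex.ofReal_zero, sub_zero, ← Complex.ofReal_exp,
    ← Complex.ofReal_mul] at h
  exact_mod_cast h

theorem Continuous.forall_pos_or_forall_neg {f : ℝ → ℝ} (hf : Continuous f)
    (h0 : ∀ t, f t ≠ 0) : (∀ t, 0 < f t) ∨ ∀ t, f t < 0 := by
  by_contra! h
  obtain ⟨⟨t₁, ht₁⟩, ⟨t₂, ht₂⟩⟩ := h
  obtain ⟨t, ht⟩ := intermediate_value_univ t₁ t₂ hf ⟨ht₁, ht₂⟩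
  exact h0 t ht

theorem quadratic_form_ne_zero {d e h : ℝ} (hdh : 0 < 4 * d * h - e ^ 2) {x y : ℝ}
    (hxy : x ≠ 0 ∨ y ≠ 0) : d * x ^ 2 + e * x * y + h * y ^ 2 ≠ 0 := by
  intro hQ
  have hsq : (2 * d * x + e * y) ^ 2 + (4 * d * h - e ^ 2) * y ^ 2 = 0 := by
    linear_combination 4 * d * hQ
  have hy : y = 0 := by
    have : (4 * d * h - e ^ 2) * y ^ 2 = 0 := by
      nlinarith [sq_nonneg (2 * d * x + e * y), mul_nonneg hdh.le (sq_nonneg y)]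
    simpa [hdh.ne'] using this
  have hx : x ≠ 0 := hxy.resolve_right (not_not.2 hy)
  have hd : d = 0 := by simpa [hy, hx] using hQ
  subst hd
  nlinarith [sq_nonneg e]

theorem polar_injective {r r' θ θ' : ℝ} (hr : 0 < r) (hr' : 0 < r')
    (h : (r * cos θ, r * sin θ) = (r' * cos θ', r' * sin θ')) :
    r = r' ∧ cos θ = cos θ' ∧ sin θ = sin θ' := by
  obtain ⟨hc, hs⟩ := Prod.ext_iff.1 h
  have hsq : r ^ 2 = r' ^ 2 := by
    linear_combination (r * cos θ + r' * cos θ') * hc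
      + (r * sin θ + r' * sin θ') * hs
      - r ^ 2 * sin_sq_add_cos_sq θ + r' ^ 2 * sin_sq_add_cos_sq θ'
  have hrr : r = r' := (sq_eq_sq₀ hr.le hr'.le).1 hsq
  subst hrr
  exact ⟨rfl, mul_left_cancel₀ hr.ne' hc, mul_left_cancel₀ hr.ne' hs⟩

noncomputable def abelField (q r s : ℝ → ℝ) (t x : ℝ) : ℝ :=
  q t * x + r t * x ^ 2 + s t * x ^ 3

noncomputable def logCrossRatio (x₁ x₂ x₃ x₄ : ℝ) : ℝ :=
  log (x₄ - x₂) + log (x₃ - x₁) - log (x₄ - x₁) - log (x₃ - x₂)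

section Abel

variable {q r s : ℝ → ℝ}

theorem abelField_sub (t x y : ℝ) :
    abelField q r s t y - abelField q r s t x =
      (q t + r t * (x + y) + s t * (x ^ 2 + x * y + y ^ 2)) * (y - x) := by
  unfold abelField; ring

theorem hasDerivAt_log_sub_of_abel {x y : ℝ → ℝ} {t : ℝ}
    (hx : HasDerivAt x (abelField q r s t (x t)) t)
    (hy : HasDerivAt y (abelField q r s t (y t)) t) (hne : y t - x t ≠ 0) :
    HasDerivAt (fun t => log (y t - x t))
      (q t + r t * (x t + y t) + s t * (x t ^ 2 + x t * y t + y t ^ 2)) t :=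
  ((hy.sub hx).log hne).congr_deriv
    (by rw [abelField_sub, Pi.sub_apply, mul_div_cancel_right₀ _ hne])

theorem hasDerivAt_logCrossRatio_of_abel {x₁ x₂ x₃ x₄ : ℝ → ℝ} {t : ℝ}
    (h₁ : HasDerivAt x₁ (abelField q r s t (x₁ t)) t)
    (h₂ : HasDerivAt x₂ (abelField q r s t (x₂ t)) t)
    (h₃ : HasDerivAt x₃ (abelField q r s t (x₃ t)) t)
    (h₄ : HasDerivAt x₄ (abelField q r s t (x₄ t)) t)
    (h₄₂ : x₄ t - x₂ t ≠ 0) (h₃₁ : x₃ t - x₁ t ≠ 0)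
    (h₄₁ : x₄ t - x₁ t ≠ 0) (h₃₂ : x₃ t - x₂ t ≠ 0) :
    HasDerivAt (fun t => logCrossRatio (x₁ t) (x₂ t) (x₃ t) (x₄ t))
      (s t * (x₄ t - x₃ t) * (x₂ t - x₁ t)) t :=
  ((((hasDerivAt_log_sub_of_abel h₂ h₄ h₄₂).add (hasDerivAt_log_sub_of_abel h₁ h₃ h₃₁)).sub
    (hasDerivAt_log_sub_of_abel h₁ h₄ h₄₁)).sub
    (hasDerivAt_log_sub_of_abel h₂ h₃ h₃₂)).congr_deriv (by ring)

theorem abel_eq_or_lt_or_gt (hq : Continuous q) (hr : Continuous r) (hs : Continuous s)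
    {x y : ℝ → ℝ}
    (hx : ∀ t, HasDerivAt x (abelField q r s t (x t)) t)
    (hy : ∀ t, HasDerivAt y (abelField q r s t (y t)) t) :
    x = y ∨ (∀ t, x t < y t) ∨ ∀ t, y t < x t := by
  have hxc : Continuous x := Differentiable.continuous fun t => (hx t).differentiableAt
  have hyc : Continuous y := Differentiable.continuous fun t => (hy t).differentiableAt
  have hD := eq_mul_exp_integral_of_hasDerivAt (D := fun t => y t - x t)
    (by fun_prop : Continuous fun t =>
      q t + r t * (x t + y t) + s t * (x t ^ 2 + x t * y t + y t ^ 2))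
    (fun t => ((hy t).sub (hx t)).congr_deriv (abelField_sub t (x t) (y t)))
  rcases lt_trichotomy (x 0) (y 0) with h | h | h
  · exact Or.inr <| Or.inl fun t =>
      sub_pos.1 <| (hD t).symm ▸ mul_pos (sub_pos.2 h) (exp_pos _)
  · exact Or.inl <| funext fun t => (sub_eq_zero.1 <| by simpa [h] using hD t).symm
  · exact Or.inr <| Or.inr fun t =>
      sub_neg.1 <| (hD t).symm ▸ mul_neg_of_neg_of_pos (sub_neg.2 h) (exp_pos _)

theorem abel_false_of_four_ordered_periodic (hs : Continuous s) (hs₀ : ∀ t, s t ≠ 0)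
    {L : ℝ} (hL : 0 < L) {x₁ x₂ x₃ x₄ : ℝ → ℝ}
    (h₁ : ∀ t, HasDerivAt x₁ (abelField q r s t (x₁ t)) t)
    (h₂ : ∀ t, HasDerivAt x₂ (abelField q r s t (x₂ t)) t)
    (h₃ : ∀ t, HasDerivAt x₃ (abelField q r s t (x₃ t)) t)
    (h₄ : ∀ t, HasDerivAt x₄ (abelField q r s t (x₄ t)) t)
    (hp₁ : Function.Periodic x₁ L) (hp₂ : Function.Periodic x₂ L)
    (hp₃ : Function.Periodic x₃ L) (hp₄ : Function.Periodic x₄ L)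
    (h₁₂ : ∀ t, x₁ t < x₂ t) (h₂₃ : ∀ t, x₂ t < x₃ t) (h₃₄ : ∀ t, x₃ t < x₄ t) :
    False := by
  have hc₁ : Continuous x₁ := Differentiable.continuous fun t => (h₁ t).differentiableAt
  have hc₂ : Continuous x₂ := Differentiable.continuous fun t => (h₂ t).differentiableAt
  have hc₃ : Continuous x₃ := Differentiable.continuous fun t => (h₃ t).differentiableAt
  have hc₄ : Continuous x₄ := Differentiable.continuous fun t => (h₄ t).differentiableAt
  have hW : ∀ t, HasDerivAt (fun t => logCrossRatio (x₁ t) (x₂ t) (x₃ t) (x₄ t))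
      (s t * (x₄ t - x₃ t) * (x₂ t - x₁ t)) t := fun t =>
    hasDerivAt_logCrossRatio_of_abel (h₁ t) (h₂ t) (h₃ t) (h₄ t)
      (sub_pos.2 ((h₂₃ t).trans (h₃₄ t))).ne' (sub_pos.2 ((h₁₂ t).trans (h₂₃ t))).ne'
      (sub_pos.2 (((h₁₂ t).trans (h₂₃ t)).trans (h₃₄ t))).ne' (sub_pos.2 (h₂₃ t)).ne'
  have hint : ∫ t in (0 : ℝ)..L, s t * (x₄ t - x₃ t) * (x₂ t - x₁ t) = 0 := by
    rw [intervalIntegral.integral_eq_sub_of_hasDerivAt (fun t _ => hW t)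
      ((by fun_prop : Continuous _).intervalIntegrable _ _),
      hp₁.eq, hp₂.eq, hp₃.eq, hp₄.eq, sub_self]
  have hP : ∀ t, 0 < (x₄ t - x₃ t) * (x₂ t - x₁ t) := fun t =>
    mul_pos (sub_pos.2 (h₃₄ t)) (sub_pos.2 (h₁₂ t))
  rcases hs.forall_pos_or_forall_neg hs₀ with hpos | hneg
  · refine (intervalIntegral.intervalIntegral_pos_of_pos_on
      ((by fun_prop : Continuous _).intervalIntegrable _ _) (fun t _ => ?_) hL).ne' hint
    rw [mul_assoc]; exact mul_pos (hpos t) (hP t)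
  · have hc : Continuous fun t => -(s t * (x₄ t - x₃ t) * (x₂ t - x₁ t)) := by fun_prop
    refine (intervalIntegral.intervalIntegral_pos_of_pos_on (hc.intervalIntegrable _ _)
      (fun t _ => ?_) hL).ne' (by rw [intervalIntegral.integral_neg, hint, neg_zero])
    rw [mul_assoc, neg_pos]; exact mul_neg_of_neg_of_pos (hneg t) (hP t)

theorem abel_neg_comp_add_pi (hqπ : ∀ t, q (t + π) = q t) (hrπ : ∀ t, r (t + π) = -r t)
    (hsπ : ∀ t, s (t + π) = s t) {x : ℝ → ℝ}
    (hx : ∀ t, HasDerivAt x (abelField q r s t (x t)) t) (t : ℝ) :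
    HasDerivAt (fun t => -x (t + π)) (abelField q r s t (-x (t + π))) t :=
  ((hx (t + π)).comp_add_const t π).neg.congr_deriv
    (by simp only [abelField, hqπ, hrπ, hsπ]; ring)

theorem abel_false_of_periodic_of_pos_of_lt (hs : Continuous s) (hs₀ : ∀ t, s t ≠ 0)
    (hqπ : ∀ t, q (t + π) = q t) (hrπ : ∀ t, r (t + π) = -r t) (hsπ : ∀ t, s (t + π) = s t)
    {L : ℝ} (hL : 0 < L) {x y : ℝ → ℝ}
    (hx : ∀ t, HasDerivAt x (abelField q r s t (x t)) t)
    (hy : ∀ t, HasDerivAt y (abelField q r s t (y t)) t)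
    (hpx : Function.Periodic x L) (hpy : Function.Periodic y L)
    (hx₀ : ∀ t, 0 < x t) (hxy : ∀ t, x t < y t) : False :=
  abel_false_of_four_ordered_periodic hs hs₀ hL
    (abel_neg_comp_add_pi hqπ hrπ hsπ hy) (abel_neg_comp_add_pi hqπ hrπ hsπ hx) hx hy
    ((hpy.add_const π).comp Neg.neg) ((hpx.add_const π).comp Neg.neg) hpx hpy
    (fun t => neg_lt_neg (hxy (t + π))) (fun t => (neg_neg_of_pos (hx₀ _)).trans (hx₀ t)) hxy

theorem abel_eq_of_periodic_of_pos (hq : Continuous q) (hr : Continuous r)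
    (hs : Continuous s) (hs₀ : ∀ t, s t ≠ 0)
    (hqπ : ∀ t, q (t + π) = q t) (hrπ : ∀ t, r (t + π) = -r t) (hsπ : ∀ t, s (t + π) = s t)
    {L : ℝ} (hL : 0 < L) {x y : ℝ → ℝ}
    (hx : ∀ t, HasDerivAt x (abelField q r s t (x t)) t)
    (hy : ∀ t, HasDerivAt y (abelField q r s t (y t)) t)
    (hpx : Function.Periodic x L) (hpy : Function.Periodic y L)
    (hx₀ : ∀ t, 0 < x t) (hy₀ : ∀ t, 0 < y t) : x = y := by
  rcases abel_eq_or_lt_or_gt hq hr hs hx hy with hxy | hxy | hxy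
  · exact hxy
  · exact (abel_false_of_periodic_of_pos_of_lt hs hs₀ hqπ hrπ hsπ hL hx hy hpx hpy
      hx₀ hxy).elim
  · exact (abel_false_of_periodic_of_pos_of_lt hs hs₀ hqπ hrπ hsπ hL hy hx hpy hpx
      hy₀ hxy).elim

end Abel

section Rigid

variable {F : ℝ × ℝ → ℝ} {γ : ℝ → ℝ × ℝ}

theorem IsSolution.hasDerivAt_rigid_toComplex
    (hγ : IsSolution (fun p => -p.2 + p.1 * F p) (fun p => p.1 + p.2 * F p) γ) (t : ℝ) :
    HasDerivAt (fun t => equivRealProdCLM.symm (γ t))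
      ((F (γ t) + I) * equivRealProdCLM.symm (γ t)) t := by
  refine (equivRealProdCLM.symm.hasFDerivAt.comp_hasDerivAt t (hγ t)).congr_deriv ?_
  apply Complex.ext <;> simp <;> ring

theorem IsSolution.rigid_toComplex_eq (hFc : Continuous F)
    (hγ : IsSolution (fun p => -p.2 + p.1 * F p) (fun p => p.1 + p.2 * F p) γ) (t : ℝ) :
    equivRealProdCLM.symm (γ t) =
      equivRealProdCLM.symm (γ 0) * cexp ((∫ s in (0 : ℝ)..t, F (γ s) : ℝ) + t * I) := by
  have hγc : Continuous γ := Differentiable.continuous fun t => (hγ t).differentiableAt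
  have hw : ∀ u, HasDerivAt (fun u => ((∫ s in (0 : ℝ)..u, F (γ s) : ℝ) : ℂ) + u * I)
      (F (γ u) + I) u := fun u =>
    (((hFc.comp hγc).integral_hasStrictDerivAt 0 u).hasDerivAt.ofReal_comp.add
      ((hasDerivAt_id u).ofReal_comp.mul_const I)).congr_deriv (by simp)
  simpa using eq_mul_cexp_sub_of_hasDerivAt hγ.hasDerivAt_rigid_toComplex hw t

theorem IsSolution.rigid_exists_polar (hFc : Continuous F)
    (hγ : IsSolution (fun p => -p.2 + p.1 * F p) (fun p => p.1 + p.2 * F p) γ) (h0 : γ 0 ≠ 0) :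
    ∃ (σ : ℝ → ℝ) (φ : ℝ), (∀ θ, 0 < σ θ) ∧
      (∀ θ, HasDerivAt σ (σ θ * F (σ θ * cos θ, σ θ * sin θ)) θ) ∧
      ∀ θ, γ (θ - φ) = (σ θ * cos θ, σ θ * sin θ) := by
  have hγc : Continuous γ := Differentiable.continuous fun t => (hγ t).differentiableAt
  set z₀ := equivRealProdCLM.symm (γ 0)
  have hz₀ : z₀ = ‖z₀‖ * cexp (Complex.arg z₀ * I) := (Complex.norm_mul_exp_arg_mul_I z₀).symm
  set r₀ := ‖z₀‖
  set φ := Complex.arg z₀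
  set A : ℝ → ℝ := fun t => ∫ s in (0 : ℝ)..t, F (γ s)
  have hr₀ : 0 < r₀ := norm_pos_iff.2 (by simpa [z₀] using h0)
  set σ : ℝ → ℝ := fun θ => r₀ * exp (A (θ - φ))
  have hpolar : ∀ θ, γ (θ - φ) = (σ θ * cos θ, σ θ * sin θ) := by
    intro θ
    have h : equivRealProdCLM.symm (γ (θ - φ)) = (σ θ : ℂ) * cexp (θ * I) := by
      rw [hγ.rigid_toComplex_eq hFc]
      change z₀ * _ = _
      rw [hz₀]
      push_cast [σ, A]
      rw [mul_assoc, ← Complex.exp_add, mul_assoc, ← Complex.exp_add]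
      ring_nf
    rw [← equivRealProdCLM.apply_symm_apply (γ _), h]
    ext <;> simp [Complex.exp_ofReal_mul_I_re, Complex.exp_ofReal_mul_I_im]
  refine ⟨σ, φ, fun θ => by positivity, fun θ => ?_, hpolar⟩
  refine ((((hFc.comp hγc).integral_hasStrictDerivAt 0 (θ - φ)).hasDerivAt.comp_sub_const
    θ φ).exp.const_mul r₀).congr_deriv ?_
  simp only [Function.comp_apply, hpolar, σ]
  ring

theorem IsSolution.rigid_periodic_polar (hFc : Continuous F)
    (hγ : IsSolution (fun p => -p.2 + p.1 * F p) (fun p => p.1 + p.2 * F p) γ)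
    (hp : IsPeriodicSol γ) (hn : IsNonconstant γ) :
    ∃ (σ : ℝ → ℝ) (n : ℕ), 0 < n ∧ (∀ θ, 0 < σ θ) ∧ Function.Periodic σ (n * (2 * π)) ∧
      (∀ θ, HasDerivAt σ (σ θ * F (σ θ * cos θ, σ θ * sin θ)) θ) ∧
      Set.range γ = Set.range fun θ => (σ θ * cos θ, σ θ * sin θ) := by
  have h0 : γ 0 ≠ 0 := by
    intro h0
    obtain ⟨t, t', ht⟩ := hn
    have hzero : ∀ t, γ t = 0 := fun t => equivRealProdCLM.symm.injective <| by
      simpa [h0] using hγ.rigid_toComplex_eq hFc t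
    exact ht (by rw [hzero t, hzero t'])
  obtain ⟨σ, φ, hσ₀, hσ, hpolar⟩ := hγ.rigid_exists_polar hFc h0
  obtain ⟨T, hT, hγT⟩ := hp
  have hσT : ∀ θ, σ (θ + T) = σ θ ∧ cos (θ + T) = cos θ ∧
      sin (θ + T) = sin θ := fun θ =>
    polar_injective (hσ₀ _) (hσ₀ θ) (by rw [← hpolar, ← hpolar, add_sub_right_comm, hγT])
  obtain ⟨n, rfl⟩ := (cos_eq_one_iff T).1 (by simpa using (hσT 0).2.1)
  have hn₀ : 0 < n := by exact_mod_cast pos_of_mul_pos_left hT Real.two_pi_pos.le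
  lift n to ℕ using hn₀.le
  refine ⟨σ, n, by exact_mod_cast hn₀, hσ₀, fun θ => (hσT θ).1, hσ, ?_⟩
  rw [← funext hpolar]
  exact ((Equiv.subRight φ).surjective.range_comp γ).symm

end Rigid

/-- Corollary (co:rig): the rigid cubic system with `F = a + bx + cy + dx² + exy + hy²`
and `4dh − e² > 0` has at most one periodic orbit. -/
theorem stmt_11 (a b c d e h : ℝ) (hdh : 0 < 4 * d * h - e ^ 2)
    (F : ℝ × ℝ → ℝ)
    (hF : F = fun p => a + b * p.1 + c * p.2 + d * p.1 ^ 2 + e * p.1 * p.2 + h * p.2 ^ 2)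
    (γ₁ γ₂ : ℝ → ℝ × ℝ)
    (hγ₁ : IsSolution (fun p => -p.2 + p.1 * F p) (fun p => p.1 + p.2 * F p) γ₁)
    (hγ₂ : IsSolution (fun p => -p.2 + p.1 * F p) (fun p => p.1 + p.2 * F p) γ₂)
    (hp₁ : IsPeriodicSol γ₁) (hp₂ : IsPeriodicSol γ₂)
    (hn₁ : IsNonconstant γ₁) (hn₂ : IsNonconstant γ₂) :
    Set.range γ₁ = Set.range γ₂ := by
  have hFc : Continuous F := by rw [hF]; fun_prop
  obtain ⟨σ₁, n₁, hn₁₀, hσ₁₀, hσ₁per, hσ₁, hrange₁⟩ := hγ₁.rigid_periodic_polar hFc hp₁ hn₁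
  obtain ⟨σ₂, n₂, hn₂₀, hσ₂₀, hσ₂per, hσ₂, hrange₂⟩ := hγ₂.rigid_periodic_polar hFc hp₂ hn₂
  have habel : ∀ σ : ℝ → ℝ,
      (∀ θ, HasDerivAt σ (σ θ * F (σ θ * cos θ, σ θ * sin θ)) θ) →
      ∀ θ, HasDerivAt σ (abelField (fun _ => a) (fun θ => b * cos θ + c * sin θ)
        (fun θ => d * cos θ ^ 2 + e * cos θ * sin θ + h * sin θ ^ 2)
        θ (σ θ)) θ := fun σ hσ θ =>
    (hσ θ).congr_deriv (by subst hF; simp only [abelField]; ring)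
  have hL : (0 : ℝ) < n₂ * (n₁ * (2 * π)) := by
    have := Nat.cast_pos (α := ℝ) |>.2 hn₁₀
    have := Nat.cast_pos (α := ℝ) |>.2 hn₂₀
    positivity
  have hσeq : σ₁ = σ₂ := abel_eq_of_periodic_of_pos (by fun_prop) (by fun_prop) (by fun_prop)
    (fun θ => quadratic_form_ne_zero hdh (not_and_or.1 fun hcs => by
      simpa [hcs.1, hcs.2] using sin_sq_add_cos_sq θ))
    (fun _ => rfl) (fun θ => by simp only [cos_add_pi, sin_add_pi]; ring)
    (fun θ => by simp only [cos_add_pi, sin_add_pi]; ring) hL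
    (habel σ₁ hσ₁) (habel σ₂ hσ₂) (hσ₁per.nat_mul n₂)
    (mul_left_comm (n₂ : ℝ) n₁ _ ▸ hσ₂per.nat_mul n₁) hσ₁₀ hσ₂₀
  rw [hrange₁, hrange₂, hσeq]
end

section
/- Let F : ℝ → ℝ be a C² function. Set P(x,y) = y − F(x), Q(x,y) = −x, and V(x,y) = x² + y² + F(x)² − 2·y·F(x) + x·(y − F(x))·F'(x). Then, identically on ℝ², V_x·P + V_y·Q − (P_x + Q_y)·V = (y − F(x))²·x·F''(x). -/
/-! The identity is a direct computation: with `P_x + Q_y = -F'(x)`, the terms of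
`V_x P + V_y Q - (P_x + Q_y) V` not involving `F''` cancel, leaving
`x (y - F) F''` from `V_x` multiplied by `P = y - F`. -/

open MeasureTheory

theorem hasDerivAt_lienardV_fst {F : ℝ → ℝ} {x : ℝ} (y : ℝ) (hF : DifferentiableAt ℝ F x)
    (hF' : DifferentiableAt ℝ (deriv F) x) :
    HasDerivAt (fun u => u ^ 2 + y ^ 2 + F u ^ 2 - 2 * y * F u + u * (y - F u) * deriv F u)
      (2 * x + 2 * F x * deriv F x - 2 * y * deriv F x
        + (y - F x - x * deriv F x) * deriv F x + x * (y - F x) * deriv (deriv F) x) x := by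
  have hFx := hF.hasDerivAt
  have hxF : HasDerivAt (fun u => u * (y - F u)) (y - F x - x * deriv F x) x :=
    ((hasDerivAt_id' x).fun_mul (hFx.const_sub y)).congr_deriv (by ring)
  exact (((((hasDerivAt_pow 2 x).add_const (y ^ 2)).fun_add (hFx.fun_pow 2)).fun_sub
    (hFx.const_mul (2 * y))).fun_add (hxF.fun_mul hF'.hasDerivAt)).congr_deriv (by norm_num; ring)

theorem hasDerivAt_lienardV_snd (F : ℝ → ℝ) (x y : ℝ) :
    HasDerivAt (fun v => x ^ 2 + v ^ 2 + F x ^ 2 - 2 * v * F x + x * (v - F x) * deriv F x)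
      (2 * y - 2 * F x + x * deriv F x) y :=
  ((((hasDerivAt_pow 2 y).const_add (x ^ 2)).add_const (F x ^ 2)).fun_sub
    ((hasDerivAt_id' y).const_mul 2 |>.mul_const (F x))).fun_add
      (((hasDerivAt_id' y).sub_const (F x)).const_mul x |>.mul_const (deriv F x))
    |>.congr_deriv (by norm_num)

/-- The Dulac identity for the Liénard system via the curvature function:
with `V = x² + y² + F² − 2yF + x(y − F)F'`, `P = y − F(x)`, `Q = −x`, one has
`V_x P + V_y Q − (P_x + Q_y) V = (y − F)² x F''`. -/
theorem stmt_14 (F : ℝ → ℝ) (hF : ContDiff ℝ 2 F)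
    (P Q V : ℝ × ℝ → ℝ)
    (hP : P = fun p => p.2 - F p.1)
    (hQ : Q = fun p => -p.1)
    (hV : V = fun p => p.1 ^ 2 + p.2 ^ 2 + F p.1 ^ 2 - 2 * p.2 * F p.1
      + p.1 * (p.2 - F p.1) * deriv F p.1) :
    ∀ p : ℝ × ℝ,
      pdx V p * P p + pdy V p * Q p - (pdx P p + pdy Q p) * V p =
        (p.2 - F p.1) ^ 2 * p.1 * deriv (deriv F) p.1 := by
  rintro ⟨x, y⟩
  subst hP hQ hV
  have hF₁ : Differentiable ℝ F := hF.differentiable two_ne_zero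
  have hF₂ : Differentiable ℝ (deriv F) := hF.differentiable_deriv_two
  simp only [pdx, pdy]
  rw [(hasDerivAt_lienardV_fst y (hF₁ x) (hF₂ x)).deriv, (hasDerivAt_lienardV_snd F x y).deriv,
    ((hF₁ x).hasDerivAt.const_sub y).deriv, deriv_const]
  ring
end

section
/- Let m ≥ 0 be an integer and r > 0 a real number. Then ∫₀^{2π} |sin θ|^m · (r⁴·cos⁴θ − r²·cos²θ) dθ = (√π / 2) · (Γ((m+1)/2) / Γ((m+6)/2)) · r² · (3·r² − (m+4)), where Γ is the Euler Gamma function. In particular, this expression has a unique positive zero in r, at r = √((m+4)/3). -/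
/-!
On `[0, π]` the integrand is `sin^m` times a polynomial in `cos² = 1 - sin²`, so the integral is a
combination of the Wallis integrals `∫₀^π sin^n` for `n = m, m + 2, m + 4`, and the doubling to
`[0, 2π]` comes from `π`-periodicity. The reduction formula
`∫₀^π sin^(n+2) = (n+1)/(n+2) ∫₀^π sin^n` expresses everything through `∫₀^π sin^m`, which, by the
same recursion and `Γ(s+1) = s Γ(s)`, equals `√π Γ((m+1)/2) / Γ((m+2)/2)`.
-/

open Real intervalIntegral

theorem integral_sin_pow_add_two_zero_pi (n : ℕ) :
    ∫ x in 0..π, sin x ^ (n + 2) = (n + 1) / (n + 2) * ∫ x in 0..π, sin x ^ n := by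
  simp [integral_sin_pow]

theorem integral_sin_pow_zero_pi_eq_Gamma (n : ℕ) :
    ∫ x in 0..π, sin x ^ n = √π * Gamma ((n + 1) / 2) / Gamma ((n + 2) / 2) := by
  induction n using Nat.twoStepInduction with
  | zero => norm_num [Gamma_one_half_eq, mul_self_sqrt pi_pos.le]
  | one =>
    norm_num
    rw [show (3 : ℝ) / 2 = 1 / 2 + 1 by norm_num, Gamma_add_one (by norm_num), Gamma_one_half_eq]
    field_simp
  | more n ih _ =>
    have hG : Gamma ((n + 2) / 2) ≠ 0 := (Gamma_pos_of_pos (by positivity)).ne'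
    rw [integral_sin_pow_add_two_zero_pi, ih]
    push_cast
    rw [show ((n : ℝ) + 2 + 1) / 2 = (n + 1) / 2 + 1 by ring,
      show ((n : ℝ) + 2 + 2) / 2 = (n + 2) / 2 + 1 by ring,
      Gamma_add_one (by positivity), Gamma_add_one (by positivity)]
    field_simp

theorem Function.Periodic.intervalIntegral_zero_two_mul {f : ℝ → ℝ} {T : ℝ}
    (hf : Function.Periodic f T) (hcont : Continuous f) :
    ∫ x in 0..2 * T, f x = 2 * ∫ x in 0..T, f x := by
  have := hf.intervalIntegral_add_eq_add 0 T fun _ _ ↦ hcont.intervalIntegrable _ _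
  rw [two_mul, this, zero_add, two_mul]

theorem integral_abs_sin_pow_mul_cos_quartic (m : ℕ) (r : ℝ) :
    ∫ θ in 0..2 * π, |sin θ| ^ m * (r ^ 4 * cos θ ^ 4 - r ^ 2 * cos θ ^ 2) =
      2 * (∫ x in 0..π, sin x ^ m) / ((m + 2) * (m + 4)) * r ^ 2 * (3 * r ^ 2 - (m + 4)) := by
  have hper : Function.Periodic
      (fun θ ↦ |sin θ| ^ m * (r ^ 4 * cos θ ^ 4 - r ^ 2 * cos θ ^ 2)) π := by
    intro θ
    simp [sin_add_pi, cos_add_pi, Even.neg_pow (by decide : Even 4)]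
  have hexpand : ∀ θ ∈ Set.uIcc 0 π, |sin θ| ^ m * (r ^ 4 * cos θ ^ 4 - r ^ 2 * cos θ ^ 2) =
      (r ^ 4 - r ^ 2) * sin θ ^ m - (2 * r ^ 4 - r ^ 2) * sin θ ^ (m + 2)
        + r ^ 4 * sin θ ^ (m + 4) := by
    intro θ hθ
    rw [Set.uIcc_of_le pi_pos.le] at hθ
    rw [abs_of_nonneg (sin_nonneg_of_mem_Icc hθ), show cos θ ^ 4 = (cos θ ^ 2) ^ 2 by ring,
      cos_sq']
    ring
  rw [hper.intervalIntegral_zero_two_mul (by fun_prop), integral_congr hexpand,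
    integral_add, integral_sub, integral_const_mul, integral_const_mul, integral_const_mul,
    integral_sin_pow_add_two_zero_pi (m + 2), integral_sin_pow_add_two_zero_pi m]
  · push_cast
    field_simp
    ring
  all_goals apply Continuous.intervalIntegrable; fun_prop

theorem two_mul_integral_sin_pow_div_eq_Gamma (m : ℕ) :
    2 * (∫ x in 0..π, sin x ^ m) / ((m + 2) * (m + 4)) =
      √π / 2 * (Gamma ((m + 1) / 2) / Gamma ((m + 6) / 2)) := by
  have hG : Gamma ((m + 2) / 2) ≠ 0 := (Gamma_pos_of_pos (by positivity)).ne'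
  rw [integral_sin_pow_zero_pi_eq_Gamma, show ((m : ℝ) + 6) / 2 = (m + 2) / 2 + 1 + 1 by ring,
    Gamma_add_one (by positivity), Gamma_add_one (by positivity)]
  field_simp
  ring

theorem mul_sq_mul_three_mul_sq_sub_eq_zero_iff {C c r : ℝ} (hC : C ≠ 0) (hr : 0 < r)
    (hc : 0 ≤ c) : C * r ^ 2 * (3 * r ^ 2 - c) = 0 ↔ r = √(c / 3) := by
  rw [eq_comm (b := √_), sqrt_eq_iff_eq_sq (by positivity) hr.le]
  simp only [mul_eq_zero, hC, pow_eq_zero_iff two_ne_zero, hr.ne', or_self, false_or, sub_eq_zero]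
  constructor <;> intro h <;> linarith

/-- The Melnikov integral of the system `ẋ = y − λ|y|^m(x³−x)`, `ẏ = −x` over the circle of
radius `r`, and its unique positive zero `r = √((m+4)/3)`. -/
theorem stmt_16 (m : ℕ) (r : ℝ) (hr : 0 < r) :
    (∫ θ in (0:ℝ)..(2 * π),
        |Real.sin θ| ^ m * (r ^ 4 * Real.cos θ ^ 4 - r ^ 2 * Real.cos θ ^ 2)) =
      (Real.sqrt π / 2) * (Real.Gamma (((m : ℝ) + 1) / 2) / Real.Gamma (((m : ℝ) + 6) / 2))
        * r ^ 2 * (3 * r ^ 2 - ((m : ℝ) + 4)) ∧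
    ((∫ θ in (0:ℝ)..(2 * π),
        |Real.sin θ| ^ m * (r ^ 4 * Real.cos θ ^ 4 - r ^ 2 * Real.cos θ ^ 2)) = 0 ↔
      r = Real.sqrt (((m : ℝ) + 4) / 3)) := by
  rw [integral_abs_sin_pow_mul_cos_quartic, two_mul_integral_sin_pow_div_eq_Gamma]
  have hC : √π / 2 * (Gamma ((m + 1) / 2) / Gamma ((m + 6) / 2)) ≠ 0 := by positivity
  exact ⟨rfl, mul_sq_mul_three_mul_sq_sub_eq_zero_iff hC hr (by positivity)⟩
end

section
/- Let m ≥ 2 be an integer and let b, c be real numbers with c ≥ 0. Then z^m + b·z + c ≥ 0 for all z ≥ 0 if and only if b ≥ −m·(c/(m−1))^{(m−1)/m}. -/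
/-!
Put `t = (c/(m-1))^((m-1)/m)`. Young's inequality with exponents `m` and `m/(m-1)`, applied to
`z * t`, gives `m t z ≤ z^m + c` for every `z ≥ 0`, with equality at `z = (c/(m-1))^(1/m)`.
Hence `z^m + bz + c ≥ (b + m t) z` is nonnegative when `b ≥ -m t`, and negative at that point when
`b < -m t` and `c > 0`. For `c = 0` the threshold is `0`, and `z^m + bz < 0` for small `z > 0`
as soon as `b < 0`.
-/

open Real

lemma mul_rpow_mul_le_pow_add {m : ℕ} (hm : 1 < m) {c z : ℝ} (hc : 0 ≤ c) (hz : 0 ≤ z) :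
    m * ((c / (m - 1)) ^ (((m : ℝ) - 1) / m)) * z ≤ z ^ m + c := by
  have hm' : (1 : ℝ) < m := by exact_mod_cast hm
  have hm1 : (m : ℝ) - 1 ≠ 0 := by linarith
  have hD : 0 ≤ c / (m - 1) := div_nonneg hc (by linarith)
  have hyoung := young_inequality_of_nonneg hz (rpow_nonneg hD (((m : ℝ) - 1) / m))
    (Real.HolderConjugate.conjExponent hm')
  have ht : ((c / (m - 1)) ^ (((m : ℝ) - 1) / m)) ^ conjExponent (m : ℝ) = c / (m - 1) := by
    rw [← rpow_mul hD, conjExponent, div_mul_div_comm, mul_comm, div_self (by positivity),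
      rpow_one]
  rw [ht, rpow_natCast, conjExponent] at hyoung
  calc (m : ℝ) * ((c / (m - 1)) ^ (((m : ℝ) - 1) / m)) * z
      = m * (z * (c / (m - 1)) ^ (((m : ℝ) - 1) / m)) := by ring
    _ ≤ m * (z ^ m / m + c / (m - 1) / (m / (m - 1))) := by gcongr
    _ = z ^ m + c := by field_simp

lemma exists_pow_add_eq_mul_rpow_mul {m : ℕ} (hm : 1 < m) {c : ℝ} (hc : 0 < c) :
    ∃ z > 0, z ^ m + c = m * ((c / (m - 1)) ^ (((m : ℝ) - 1) / m)) * z := by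
  have hm' : (1 : ℝ) < m := by exact_mod_cast hm
  have hm1 : (m : ℝ) - 1 ≠ 0 := by linarith
  have hD : 0 < c / (m - 1) := div_pos hc (by linarith)
  refine ⟨(c / (m - 1)) ^ (1 / (m : ℝ)), rpow_pos_of_pos hD _, ?_⟩
  rw [mul_assoc, ← rpow_add hD, ← rpow_natCast, ← rpow_mul hD.le,
    show ((m : ℝ) - 1) / m + 1 / m = 1 by field_simp; ring,
    one_div_mul_cancel (by positivity), rpow_one]
  field_simp
  ring

lemma exists_pow_add_mul_neg {m : ℕ} (hm : 1 < m) {b : ℝ} (hb : b < 0) :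
    ∃ z > 0, z ^ m + b * z < 0 := by
  set z := min 1 (-b / 2)
  have hz : 0 < z := lt_min one_pos (by linarith)
  have hz_pow : z ^ (m - 1) ≤ -b / 2 :=
    (pow_le_of_le_one hz.le (min_le_left _ _) (by omega)).trans (min_le_right _ _)
  refine ⟨z, hz, ?_⟩
  rw [← Nat.sub_add_cancel hm.le, pow_succ]
  nlinarith

/-- For an integer `m ≥ 2` and `c ≥ 0`, `z^m + bz + c ≥ 0` for all `z ≥ 0` iff
`b ≥ −m (c/(m−1))^{(m−1)/m}`. -/
theorem stmt_18 (m : ℕ) (hm : 2 ≤ m) (b c : ℝ) (hc : 0 ≤ c) :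
    (∀ z : ℝ, 0 ≤ z → 0 ≤ z ^ m + b * z + c) ↔
      -(m : ℝ) * ((c / ((m : ℝ) - 1)) ^ (((m : ℝ) - 1) / (m : ℝ))) ≤ b := by
  rw [neg_mul]
  constructor
  · intro h
    by_contra! hb
    rcases hc.eq_or_lt with rfl | hc
    · have hm' : (2 : ℝ) ≤ m := by exact_mod_cast hm
      rw [zero_div, zero_rpow (div_pos (by linarith) (by linarith)).ne', mul_zero, neg_zero] at hb
      obtain ⟨z, hz, hneg⟩ := exists_pow_add_mul_neg hm hb
      linarith [h z hz.le]
    · obtain ⟨z, hz, heq⟩ := exists_pow_add_eq_mul_rpow_mul hm hc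
      nlinarith [h z hz.le]
  · intro hb z hz
    nlinarith [mul_rpow_mul_le_pow_add hm hc hz]
end
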